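/- arXiv:1610.02522 — 5 statements merged into one kernel-verified Lean document; each statement's English description precedes it below -/
import Mathlib

section
/- If a Tychonoff space X contains a countable family {F_n} of closed subsets which is compact-finite but not locally finite, and each F_n admits a functional neighborhood U_n such that the family {U_n} is compact-finite, then X is not a k_R-space. -/
/-!
Choose functions `f n : X → [0, 1]` equal to `1` on `F n` and vanishing outside `U n`, and put
`g = ∑ n, n * f n`. As `{U n}` is compact-finite, `g` is a finite sum of continuous functions on
each compact set, so in a `k_R`-space `g` would be continuous. But `g ≥ n` on `F n`, and a
continuous function with this property forces `{F n}` to be locally finite.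
-/

open Set Filter Topology Cardinal

/-- A `k`-space: a set is closed whenever its trace on every compact subset is closed. -/
def IsKSpace (X : Type*) [TopologicalSpace X] : Prop :=
  ∀ C : Set X, (∀ K : Set X, IsCompact K → IsClosed (Subtype.val ⁻¹' C : Set K)) → IsClosed C

/-- A `k_R`-space: every real-valued function which is continuous on each
compact subset is continuous. -/
def IsKRSpace (X : Type*) [TopologicalSpace X] : Prop :=
  ∀ f : X → ℝ, (∀ K : Set X, IsCompact K → ContinuousOn f K) → Continuous f

open Function

def IsCompactFinite {ι X : Type*} [TopologicalSpace X] (F : ι → Set X) : Prop :=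
  ∀ K : Set X, IsCompact K → {i | (F i ∩ K).Nonempty}.Finite

section

variable {ι X : Type*} [TopologicalSpace X]

theorem IsCompactFinite.mono {F G : ι → Set X} (hG : IsCompactFinite G) (hFG : ∀ i, F i ⊆ G i) :
    IsCompactFinite F := fun K hK =>
  (hG K hK).subset fun _ ⟨x, hxF, hxK⟩ => ⟨x, hFG _ hxF, hxK⟩

theorem IsCompactFinite.summable_apply {M : Type*} [AddCommMonoid M] [TopologicalSpace M]
    {φ : ι → X → M} (hφ : IsCompactFinite fun i => support (φ i)) (x : X) :
    Summable fun i => φ i x :=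
  summable_of_hasFiniteSupport <| (hφ {x} isCompact_singleton).subset fun _ hi => ⟨x, hi, rfl⟩

theorem IsKRSpace.continuous_tsum (hX : IsKRSpace X) {φ : ι → X → ℝ}
    (hcont : ∀ i, Continuous (φ i)) (hφ : IsCompactFinite fun i => support (φ i)) :
    Continuous fun x => ∑' i, φ i x := by
  refine hX _ fun K hK => ?_
  set S := (hφ K hK).toFinset
  have hsum : ∀ x ∈ K, ∑' i, φ i x = ∑ i ∈ S, φ i x := fun x hx =>
    tsum_eq_sum fun i hi => not_not.mp fun hne => hi ((hφ K hK).mem_toFinset.mpr ⟨x, hne, hx⟩)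
  exact (continuous_finsetSum S fun i _ => hcont i).continuousOn.congr hsum

theorem locallyFinite_of_continuous_of_le {F : ℕ → Set X} {g : X → ℝ} (hg : Continuous g)
    (hgF : ∀ n, ∀ y ∈ F n, (n : ℝ) ≤ g y) : LocallyFinite F := by
  intro x
  refine ⟨g ⁻¹' Iio (g x + 1), hg.continuousAt.preimage_mem_nhds (Iio_mem_nhds (lt_add_one _)),
    (finite_Iio ⌈g x + 1⌉₊).subset ?_⟩
  rintro n ⟨y, hyF, hyg⟩
  exact Nat.lt_ceil.mpr ((hgF n y hyF).trans_lt hyg)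

end

theorem not_isKRSpace_of_strict_cld_fan_general (X : Type*) [TopologicalSpace X]
    (F U : ℕ → Set X)
    (hnlf : ¬ ∀ x : X, ∃ V ∈ 𝓝 x, {n : ℕ | (F n ∩ V).Nonempty}.Finite)
    (hfun : ∀ n, ∃ f : X → ℝ, Continuous f ∧ (∀ y, f y ∈ Set.Icc (0 : ℝ) 1) ∧
      (∀ y ∈ F n, f y = 1) ∧ (∀ y ∉ U n, f y = 0))
    (hUcf : ∀ K : Set X, IsCompact K → {n : ℕ | (U n ∩ K).Nonempty}.Finite) :
    ¬ IsKRSpace X := by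
  intro hKR
  choose f hfc hf01 hfF hfU using hfun
  set φ : ℕ → X → ℝ := fun n x => n * f n x
  have hφ : IsCompactFinite fun n => support (φ n) :=
    IsCompactFinite.mono hUcf fun n x hx => not_not.mp fun hxU => hx (by simp [φ, hfU n x hxU])
  have hcont : Continuous fun x => ∑' n, φ n x :=
    hKR.continuous_tsum (fun n => continuous_const.mul (hfc n)) hφ
  refine hnlf (locallyFinite_of_continuous_of_le hcont fun n y hy => ?_)
  calc (n : ℝ) = φ n y := by simp [φ, hfF n y hy]
    _ ≤ ∑' m, φ m y :=
      (hφ.summable_apply y).le_tsum n fun m _ => mul_nonneg m.cast_nonneg (hf01 m y).1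

/-- A Tychonoff space containing a strict `Cld^ω`-fan (a compact-finite but not
locally finite countable family of closed sets, each with a functional neighborhood
such that the family of these neighborhoods is compact-finite) is not a `k_R`-space. -/
theorem not_isKRSpace_of_strict_cld_fan (X : Type*) [TopologicalSpace X] [T35Space X]
    (F U : ℕ → Set X)
    (hFcl : ∀ n, IsClosed (F n))
    (hFcf : ∀ K : Set X, IsCompact K → {n : ℕ | (F n ∩ K).Nonempty}.Finite)
    (hnlf : ¬ ∀ x : X, ∃ V ∈ 𝓝 x, {n : ℕ | (F n ∩ V).Nonempty}.Finite)
    (hfun : ∀ n, ∃ f : X → ℝ, Continuous f ∧ (∀ y, f y ∈ Set.Icc (0 : ℝ) 1) ∧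
      (∀ y ∈ F n, f y = 1) ∧ (∀ y ∉ U n, f y = 0))
    (hUcf : ∀ K : Set X, IsCompact K → {n : ℕ | (U n ∩ K).Nonempty}.Finite) :
    ¬ IsKRSpace X :=
  not_isKRSpace_of_strict_cld_fan_general X F U hnlf hfun hUcf
end

section
/- There exist families {A_α : α < ω₁} and {B_α : α < ω₁} of infinite subsets of ω such that (a) A_α ∩ B_β is finite for all α, β < ω₁, and (b) there is no set A ⊆ ω such that all the sets A_α \ A and B_α ∩ A for α < ω₁ are finite. -/
open Set Filter Cardinal

/-!
Code the nodes of the binary tree `2^{<ω}` by natural numbers. Every branch `x : ℕ → Bool` gives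
the sets of nodes `x ↾ m` at which `x` turns left, resp. right. A left node of `x` that is a right
node of `y` is the node where `x` and `y` split, so these intersections have at most one element.
If `S` separated the families of uncountably many distinct branches, then every branch `x` would be
decoded by `S` above some level `n` (`x ↾ m ∈ S ↔ x m = false` for `m ≥ n`); by pigeonhole two
distinct branches share both `n` and `x ↾ n`, and `S` would decode both of them at their splitting
node, which is impossible. Since `ℵ₁ ≤ 𝔠`, there are `ℵ₁` branches, and interleaving them with
their complements makes every left and right set infinite.
-/

namespace CantorTree

def branchCode (x : ℕ → Bool) (m : ℕ) : ℕ := Encodable.encode ((List.range m).map x)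

theorem branchCode_eq_branchCode_iff {x y : ℕ → Bool} {m k : ℕ} :
    branchCode x m = branchCode y k ↔ m = k ∧ ∀ i < m, x i = y i := by
  rw [branchCode, branchCode, Encodable.encode_inj]
  constructor
  · intro h
    obtain rfl : m = k := by simpa using congrArg List.length h
    exact ⟨rfl, fun i hi => List.map_inj_left.1 h i (List.mem_range.2 hi)⟩
  · rintro ⟨rfl, h⟩
    exact List.map_inj_left.2 fun i hi => h i (List.mem_range.1 hi)

theorem branchCode_injective (x : ℕ → Bool) : Function.Injective (branchCode x) :=
  fun _ _ h => (branchCode_eq_branchCode_iff.1 h).1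

theorem exists_branchCode_eq_of_ne {x y : ℕ → Bool} (hxy : x ≠ y) {n : ℕ}
    (h : ∀ i < n, x i = y i) : ∃ d, n ≤ d ∧ branchCode x d = branchCode y d ∧ x d ≠ y d := by
  classical
  have hne : ∃ d, x d ≠ y d := Function.ne_iff.1 hxy
  refine ⟨Nat.find hne, ?_, ?_, Nat.find_spec hne⟩
  · by_contra! hlt
    exact Nat.find_spec hne (h _ hlt)
  · exact branchCode_eq_branchCode_iff.2 ⟨rfl, fun i hi => not_not.1 (Nat.find_min hne hi)⟩

def leftNodes (x : ℕ → Bool) : Set ℕ := branchCode x '' {m | x m = false}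

def rightNodes (x : ℕ → Bool) : Set ℕ := branchCode x '' {m | x m = true}

theorem leftNodes_infinite {x : ℕ → Bool} (h : {m | x m = false}.Infinite) :
    (leftNodes x).Infinite :=
  h.image (branchCode_injective x).injOn

theorem rightNodes_infinite {x : ℕ → Bool} (h : {m | x m = true}.Infinite) :
    (rightNodes x).Infinite :=
  h.image (branchCode_injective x).injOn

theorem leftNodes_inter_rightNodes_subsingleton (x y : ℕ → Bool) :
    (leftNodes x ∩ rightNodes y).Subsingleton := by
  rintro _ ⟨⟨m, hxm, rfl⟩, m', hym, hm⟩ _ ⟨⟨k, hxk, rfl⟩, k', hyk, hk⟩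
  obtain ⟨rfl, hagree_m⟩ := branchCode_eq_branchCode_iff.1 hm
  obtain ⟨rfl, hagree_k⟩ := branchCode_eq_branchCode_iff.1 hk
  rcases lt_trichotomy m' k' with hlt | rfl | hlt
  · exact absurd ((hagree_k m' hlt).symm.trans hym) (by simp [hxm.out])
  · rfl
  · exact absurd ((hagree_m k' hlt).symm.trans hyk) (by simp [hxk.out])

theorem eventually_mem_iff_of_separates {x : ℕ → Bool} {S : Set ℕ}
    (hl : (leftNodes x \ S).Finite) (hr : (rightNodes x ∩ S).Finite) :
    ∀ᶠ m in atTop, (branchCode x m ∈ S ↔ x m = false) := by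
  rw [← Nat.cofinite_eq_atTop, eventually_cofinite]
  refine ((hl.union hr).preimage (branchCode_injective x).injOn).subset fun m hm => ?_
  cases hxm : x m <;> simp_all [leftNodes, rightNodes] <;> exact ⟨m, hxm, rfl⟩

theorem not_exists_separating {ι : Type*} [Uncountable ι] {f : ι → ℕ → Bool}
    (hf : Function.Injective f) :
    ¬ ∃ S : Set ℕ, ∀ i, (leftNodes (f i) \ S).Finite ∧ (rightNodes (f i) ∩ S).Finite := by
  rintro ⟨S, hS⟩
  choose n hn using fun i =>
    (eventually_mem_iff_of_separates (hS i).1 (hS i).2).exists_forall_of_atTop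
  obtain ⟨i, j, hn_eq, hcode, hij⟩ : ∃ i j, n i = n j ∧
      branchCode (f i) (n i) = branchCode (f j) (n j) ∧ i ≠ j := by
    simpa [Function.Injective] using
      not_injective_uncountable_countable fun i => (n i, branchCode (f i) (n i))
  obtain ⟨d, hnd, hsplit, hne⟩ :=
    exists_branchCode_eq_of_ne (hf.ne hij) (branchCode_eq_branchCode_iff.1 hcode).2
  have hdecode : f i d = false ↔ f j d = false := by
    rw [← hn i d hnd, ← hn j d (hn_eq ▸ hnd), hsplit]
  exact hne (by cases hi : f i d <;> cases hj : f j d <;> simp_all)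

def interleave (x : ℕ → Bool) (n : ℕ) : Bool := if n % 2 = 0 then x (n / 2) else !x (n / 2)

theorem interleave_two_mul (x : ℕ → Bool) (i : ℕ) : interleave x (2 * i) = x i := by
  simp [interleave]

theorem interleave_two_mul_add_one (x : ℕ → Bool) (i : ℕ) :
    interleave x (2 * i + 1) = !x i := by
  simp [interleave, Nat.add_mod, Nat.add_div]

theorem interleave_injective : Function.Injective interleave :=
  fun x y h => funext fun i => by simpa [interleave_two_mul] using congrFun h (2 * i)

theorem infinite_setOf_interleave_eq (x : ℕ → Bool) (b : Bool) :
    {m | interleave x m = b}.Infinite := by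
  refine infinite_of_forall_exists_gt fun a => ?_
  by_cases h : x (a + 1) = b
  · exact ⟨2 * (a + 1), by simp [interleave_two_mul, h], by omega⟩
  · exact ⟨2 * (a + 1) + 1, by cases b <;> simp_all [interleave_two_mul_add_one], by omega⟩

end CantorTree

open CantorTree in
/-- There exist `ω₁`-indexed families `A`, `B` of infinite subsets of `ω` such that
all intersections `A α ∩ B β` are finite, while no single set `S ⊆ ω` makes all
`A α \ S` and `B α ∩ S` finite. -/
theorem exists_luzin_gap (ι : Type) (hι : #ι = aleph 1) :
    ∃ A B : ι → Set ℕ,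
      (∀ α, (A α).Infinite) ∧ (∀ α, (B α).Infinite) ∧
      (∀ α β, (A α ∩ B β).Finite) ∧
      ¬ ∃ S : Set ℕ, ∀ α, (A α \ S).Finite ∧ (B α ∩ S).Finite := by
  have : Uncountable ι := by
    rw [← aleph0_lt_mk_iff, hι]
    exact aleph0_lt_aleph_one
  obtain ⟨g⟩ : Nonempty (ι ↪ (ℕ → Bool)) := by
    rw [← Cardinal.le_def, hι, mk_arrow]
    simpa using aleph_one_le_continuum
  let f := interleave ∘ g
  exact ⟨leftNodes ∘ f, rightNodes ∘ f,
    fun i => leftNodes_infinite (infinite_setOf_interleave_eq _ _),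
    fun i => rightNodes_infinite (infinite_setOf_interleave_eq _ _),
    fun i j => (leftNodes_inter_rightNodes_subsingleton _ _).finite,
    not_exists_separating (interleave_injective.comp g.injective)⟩
end

section
/- Let {A_α : α < ω₁} and {B_α : α < ω₁} be families of infinite subsets of ω with A_α ∩ B_β finite for all α, β < ω₁. For each n ∈ ℕ let X_n = {(x(α,n), x(β,n)) : n ∈ A_α ∩ B_β, α, β ∈ ω₁} ⊆ S_{ω₁} × S_{ω₁}. Then every compact subset of S_{ω₁} × S_{ω₁} meets only finitely many of the sets X_n; that is, the family {X_n : n ∈ ℕ} is compact-finite. -/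
open Set Filter Topology Cardinal

/-- The sequential fan with spokes indexed by `κ`: underlying set is
`Option (κ × ℕ)`, with `none` the apex and `some (α, n)` the `n`-th point
of the `α`-th spoke. -/
def Fan (κ : Type*) : Type _ := Option (κ × ℕ)

/-- The quotient topology on the fan: each point `some (α, n)` is isolated and
a set containing the apex is open iff it contains a tail of every spoke. -/
instance Fan.instTopologicalSpace (κ : Type*) : TopologicalSpace (Fan κ) where
  IsOpen s := (none : Option (κ × ℕ)) ∈ s → ∀ α : κ, {n : ℕ | (some (α, n) : Option (κ × ℕ)) ∉ s}.Finite
  isOpen_univ := by intro _ α; exact Set.finite_empty.subset (fun n hn => hn trivial)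
  isOpen_inter := by
    intro s t hs ht hmem α
    refine ((hs hmem.1 α).union (ht hmem.2 α)).subset ?_
    intro n hn
    by_contra h
    simp only [Set.mem_union, Set.mem_setOf_eq] at h
    push_neg at h
    exact hn ⟨h.1, h.2⟩
  isOpen_sUnion := by
    intro S hS hmem α
    obtain ⟨s, hsS, hs⟩ := hmem
    refine (hS s hsS hs α).subset ?_
    intro n hn hns
    exact hn (Set.mem_sUnion.2 ⟨s, hsS, hns⟩)

/-- The apex of the sequential fan. -/
def Fan.apex {κ : Type*} : Fan κ := (none : Option (κ × ℕ))

/-- The `n`-th point of the `α`-th spoke of the sequential fan. -/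
def Fan.pt {κ : Type*} (α : κ) (n : ℕ) : Fan κ := (some (α, n) : Option (κ × ℕ))

/-!
A compact set `K ⊆ S_{ω₁}` meets only finitely many spokes: picking one point of `K` on each
spoke it meets gives a set that avoids the apex and meets every spoke at most once, hence is
closed and discrete, hence finite as a closed subset of `K`. Applied to the two projections of a
compact `K ⊆ S_{ω₁} × S_{ω₁}`, only finitely many `α` and `β` occur in points of `K`, so `X_n`
can meet `K` only for `n` in a finite union of the finite sets `A_α ∩ B_β`.
-/

namespace Fan

variable {κ : Type*}

lemma pt_inj {α β : κ} {m k : ℕ} : pt α m = pt β k ↔ α = β ∧ m = k :=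
  Option.some_inj.trans Prod.mk_inj

lemma eq_pt_of_ne_apex {x : Fan κ} (hx : x ≠ apex) : ∃ α n, x = pt α n := by
  rcases x with _ | ⟨α, n⟩
  · exact absurd rfl hx
  · exact ⟨α, n, rfl⟩

lemma isOpen_singleton_pt (α : κ) (n : ℕ) : IsOpen ({pt α n} : Set (Fan κ)) :=
  fun h => absurd (mem_singleton_iff.1 h) (by simp [pt])

lemma isDiscrete_of_apex_notMem {D : Set (Fan κ)} (hD : apex ∉ D) : IsDiscrete D := by
  refine isDiscrete_iff_forall_mem_exists_isOpen.2 fun x hx => ⟨{x}, ?_, ?_⟩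
  · obtain ⟨α, n, rfl⟩ := eq_pt_of_ne_apex (ne_of_mem_of_not_mem hx hD)
    exact isOpen_singleton_pt α n
  · exact singleton_inter_of_mem hx

lemma isClosed_of_finite_spokes {D : Set (Fan κ)}
    (hspoke : ∀ α, {n | pt α n ∈ D}.Finite) : IsClosed D :=
  isOpen_compl_iff.1 fun _ α => (hspoke α).subset fun _ hn => not_not.1 hn

lemma finite_spokes_of_isCompact {K : Set (Fan κ)} (hK : IsCompact K) :
    {α | ∃ n, pt α n ∈ K}.Finite := by
  set S := {α | ∃ n, pt α n ∈ K}
  choose! f hf using fun α (hα : α ∈ S) => hα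
  set D := (fun α => pt α (f α)) '' S
  have hD_apex : apex ∉ D := by
    rintro ⟨α, -, h⟩
    simp [pt, apex] at h
  have hD_spoke : ∀ α, {n | pt α n ∈ D}.Finite := fun α =>
    (finite_singleton (f α)).subset fun n ⟨β, _, h⟩ => by
      obtain ⟨rfl, rfl⟩ := pt_inj.1 h
      rfl
  have hD_finite : D.Finite :=
    (hK.of_isClosed_subset (isClosed_of_finite_spokes hD_spoke)
      (image_subset_iff.2 hf)).finite (isDiscrete_of_apex_notMem hD_apex)
  exact hD_finite.of_finite_image fun α _ β _ h => (pt_inj.1 h).1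

end Fan

theorem fan_square_family_compactFinite_general (ι : Type)
    (A B : ι → Set ℕ)
    (hAB : ∀ α β, (A α ∩ B β).Finite)
    (X : ℕ → Set (Fan ι × Fan ι))
    (hX : ∀ n, X n = {p | ∃ α β : ι, n ∈ A α ∩ B β ∧ p = (Fan.pt α n, Fan.pt β n)})
    (K : Set (Fan ι × Fan ι)) (hK : IsCompact K) :
    {n : ℕ | (X n ∩ K).Nonempty}.Finite := by
  have hS₁ := Fan.finite_spokes_of_isCompact (hK.image continuous_fst)
  have hS₂ := Fan.finite_spokes_of_isCompact (hK.image continuous_snd)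
  refine (hS₁.biUnion fun α _ => hS₂.biUnion fun β _ => hAB α β).subset ?_
  rintro n ⟨p, hpX, hpK⟩
  rw [hX n] at hpX
  obtain ⟨α, β, hn, rfl⟩ := hpX
  exact mem_biUnion ⟨n, _, hpK, rfl⟩ (mem_biUnion ⟨n, _, hpK, rfl⟩ hn)

/-- The family `{X_n}` built from almost disjoint families `A`, `B` is
compact-finite in `S_{ω₁} × S_{ω₁}`. -/
theorem fan_square_family_compactFinite (ι : Type) (hι : #ι = aleph 1)
    (A B : ι → Set ℕ) (hA : ∀ α, (A α).Infinite) (hB : ∀ α, (B α).Infinite)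
    (hAB : ∀ α β, (A α ∩ B β).Finite)
    (X : ℕ → Set (Fan ι × Fan ι))
    (hX : ∀ n, X n = {p | ∃ α β : ι, n ∈ A α ∩ B β ∧ p = (Fan.pt α n, Fan.pt β n)})
    (K : Set (Fan ι × Fan ι)) (hK : IsCompact K) :
    {n : ℕ | (X n ∩ K).Nonempty}.Finite :=
  fan_square_family_compactFinite_general ι A B hAB X hX K hK
end

section
/- For every Tychonoff space X and every n ∈ ℕ, the map f : X^n → A(X) defined by f(x₁,…,x_n) = x₁ + 2x₂ + ⋯ + 2^{n−1} x_n is a homeomorphism of X^n onto a closed subspace of A_{2^n − 1}(X); in particular, A_{2^n − 1}(X) contains a closed copy of X^n. -/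
/-!
Embed `X` into the compact space `βX`. Every continuous `ψ : βX → ℝ` restricts to `X` and extends
to a continuous character of `A`; together these form a continuous homomorphism
`Φ : A → ℝ^{C(βX, ℝ)}` sending `x` to evaluation at `x`. On `(βX)^n` the map
`T z = ∑ 2^j • ev_{z_j}` is continuous and injective (point evaluations are `ℤ`-independent by
complete regularity, and binary expansions are unique), hence a closed embedding by compactness.
Since `Φ ∘ f = T ∘ (stoneCechUnit)^n`, `f` is an embedding. Finally, if `Φ a = T z` then
comparing coefficients forces every `z_j` into `X` and `a = f x`; so the range of `f` is
`Φ⁻¹(range T)`, which is closed even in all of `A`.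
-/

open Set Filter Topology Cardinal

/-- `IsFreeAbelianTopGroup X A i` asserts that the topological abelian group `A`,
together with the map `i : X → A`, is the free Abelian topological group over `X`:
`i` is continuous, `i X` algebraically generates `A`, and every continuous map from
`X` to an Abelian topological group extends to a continuous homomorphism on `A`. -/
structure IsFreeAbelianTopGroup (X : Type*) [TopologicalSpace X]
    (A : Type*) [AddCommGroup A] [TopologicalSpace A] [IsTopologicalAddGroup A]
    (i : X → A) : Prop where
  continuous_incl : Continuous i
  generates : AddSubgroup.closure (Set.range i) = ⊤
  lift : ∀ (G : Type v) [AddCommGroup G] [TopologicalSpace G] [IsTopologicalAddGroup G]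
      (f : X → G), Continuous f → ∃ h : A →+ G, Continuous h ∧ ∀ x, h (i x) = f x

/-- `wordsLe i n` is the set of elements of `A` of reduced length at most `n` with
respect to the basis `i : X → A`: sums of at most `n` letters from `i X ∪ (-i X)`. -/
def wordsLe {X A : Type*} [AddCommGroup A] (i : X → A) (n : ℕ) : Set A :=
  {a | ∃ l : List (X × Bool), l.length ≤ n ∧
    a = (l.map fun p => if p.2 then i p.1 else -i p.1).sum}

section BinaryWord

open Finsupp

variable {B : Type*} {n : ℕ}

lemma Fin.sum_two_pow_injective :
    Function.Injective fun s : Finset (Fin n) => ∑ j ∈ s, 2 ^ (j : ℕ) := by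
  intro s t hst
  apply Finset.map_injective Fin.valEmbedding
  apply Finset.geomSum_injective le_rfl
  simpa only [Finset.sum_map, Fin.valEmbedding_apply] using hst

noncomputable def binaryWord (z : Fin n → B) : B →₀ ℤ :=
  ∑ j, single (z j) (2 ^ (j : ℕ))

lemma binaryWord_apply [DecidableEq B] (z : Fin n → B) (p : B) :
    binaryWord z p = ∑ j with z j = p, (2 : ℤ) ^ (j : ℕ) := by
  simp [binaryWord, finsetSum_apply, single_apply, Finset.sum_filter]

lemma mem_support_binaryWord (z : Fin n → B) (j : Fin n) : z j ∈ (binaryWord z).support := by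
  classical
  rw [mem_support_iff, binaryWord_apply]
  exact (Finset.sum_pos (fun _ _ => by positivity) ⟨j, by simp⟩).ne'

lemma binaryWord_injective : Function.Injective (binaryWord : (Fin n → B) → B →₀ ℤ) := by
  classical
  intro z w hzw
  funext j
  have hsum : ∑ k with z k = z j, 2 ^ (k : ℕ) = ∑ k with w k = z j, 2 ^ (k : ℕ) := by
    have := DFunLike.congr_fun hzw (z j)
    rw [binaryWord_apply, binaryWord_apply] at this
    exact_mod_cast this
  have hj : j ∈ ({k | w k = z j} : Finset (Fin n)) := Fin.sum_two_pow_injective hsum ▸ by simp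
  exact ((Finset.mem_filter.mp hj).2).symm

lemma mapDomain_binaryWord {C : Type*} (u : B → C) (z : Fin n → B) :
    mapDomain u (binaryWord z) = binaryWord (u ∘ z) := by
  rw [binaryWord, binaryWord, ← mapDomain.addMonoidHom_apply, map_sum]
  simp [mapDomain_single]

lemma linearCombination_binaryWord {M : Type*} [AddCommGroup M] (v : B → M) (z : Fin n → B) :
    linearCombination ℤ v (binaryWord z) = ∑ j : Fin n, (2 : ℤ) ^ (j : ℕ) • v (z j) := by
  simp [binaryWord, map_sum, linearCombination_single]

end BinaryWord

section WordsLe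

variable {X A : Type*} [AddCommGroup A] {i : X → A}

lemma add_mem_wordsLe {p q : ℕ} {a b : A} (ha : a ∈ wordsLe i p) (hb : b ∈ wordsLe i q) :
    a + b ∈ wordsLe i (p + q) := by
  obtain ⟨l₁, hl₁, rfl⟩ := ha
  obtain ⟨l₂, hl₂, rfl⟩ := hb
  exact ⟨l₁ ++ l₂, by rw [List.length_append]; omega, by rw [List.map_append, List.sum_append]⟩

lemma nsmul_mem_wordsLe (k : ℕ) (x : X) : k • i x ∈ wordsLe i k :=
  ⟨List.replicate k (x, true), by simp, by simp [List.map_replicate, List.sum_replicate]⟩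

lemma sum_mem_wordsLe {ι : Type*} (s : Finset ι) {g : ι → A} {m : ι → ℕ}
    (h : ∀ j ∈ s, g j ∈ wordsLe i (m j)) : ∑ j ∈ s, g j ∈ wordsLe i (∑ j ∈ s, m j) := by
  classical
  induction s using Finset.induction_on with
  | empty => exact ⟨[], by simp, by simp⟩
  | insert a s ha ih =>
    rw [Finset.sum_insert ha, Finset.sum_insert ha]
    exact add_mem_wordsLe (h a (Finset.mem_insert_self a s))
      (ih fun j hj => h j (Finset.mem_insert_of_mem hj))

lemma sum_two_pow_zsmul_mem_wordsLe {n : ℕ} (x : Fin n → X) :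
    ∑ j : Fin n, (2 : ℤ) ^ (j : ℕ) • i (x j) ∈ wordsLe i (2 ^ n - 1) := by
  have hlen : ∑ j : Fin n, 2 ^ (j : ℕ) = 2 ^ n - 1 := by
    rw [Fin.sum_univ_eq_sum_range (2 ^ ·), Nat.geomSum_eq le_rfl, Nat.div_one]
  rw [← hlen]
  refine sum_mem_wordsLe _ fun j _ => ?_
  exact_mod_cast nsmul_mem_wordsLe (i := i) (2 ^ (j : ℕ)) (x j)

end WordsLe

open Finsupp in
lemma linearIndependent_eval_continuousMap (B : Type*) [TopologicalSpace B] [T35Space B] :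
    LinearIndependent ℤ fun (p : B) (ψ : C(B, ℝ)) => ψ p := by
  classical
  rw [linearIndependent_iff]
  intro c hc
  by_contra hne
  obtain ⟨p, hp⟩ := support_nonempty_iff.mpr hne
  -- `1 - φ` is a bump function at `p` vanishing at the other points of the support of `c`.
  obtain ⟨φ, hφc, hφp, hφK⟩ := CompletelyRegularSpace.completely_regular p
    (c.support.erase p : Set B) (c.support.erase p).finite_toSet.isClosed (by simp)
  let ψ : C(B, ℝ) := ⟨fun b => 1 - φ b, by fun_prop⟩
  have hψ := congr_fun hc ψ
  rw [linearCombination_apply, Finsupp.sum, Finset.sum_apply,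
    Finset.sum_eq_single_of_mem p hp] at hψ
  · simp [ψ, hφp, mem_support_iff.mp hp] at hψ
  · intro b hb hbp
    simp [ψ, hφK (Finset.mem_coe.mpr (Finset.mem_erase.mpr ⟨hbp, hb⟩))]

section TwoPowSum

open Finsupp

variable {X B A M : Type*} [AddCommGroup A] [AddCommGroup M] {n : ℕ}

lemma LinearIndependent.injective_sum_two_pow_zsmul {v : B → M} (hv : LinearIndependent ℤ v) :
    Function.Injective fun z : Fin n → B => ∑ j : Fin n, (2 : ℤ) ^ (j : ℕ) • v (z j) := by
  intro z w hzw
  refine binaryWord_injective (hv ?_)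
  simpa only [linearCombination_binaryWord] using hzw

lemma map_sum_two_pow_zsmul {i : X → A} {w : X → M} (Φ : A →+ M) (hΦ : ∀ x, Φ (i x) = w x)
    (x : Fin n → X) :
    Φ (∑ j : Fin n, (2 : ℤ) ^ (j : ℕ) • i (x j)) = ∑ j : Fin n, (2 : ℤ) ^ (j : ℕ) • w (x j) := by
  simp [map_sum, map_zsmul, hΦ]

lemma range_sum_two_pow_zsmul_eq_preimage {i : X → A} {u : X → B} {v : B → M}
    (hi : Function.Surjective (linearCombination ℤ i)) (hu : Function.Injective u)
    (hv : LinearIndependent ℤ v) (Φ : A →+ M) (hΦ : ∀ x, Φ (i x) = v (u x)) :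
    range (fun x : Fin n → X => ∑ j : Fin n, (2 : ℤ) ^ (j : ℕ) • i (x j)) =
      Φ ⁻¹' range fun z : Fin n → B => ∑ j : Fin n, (2 : ℤ) ^ (j : ℕ) • v (z j) := by
  ext a
  refine ⟨fun ⟨x, hx⟩ => ⟨u ∘ x, by simp [← hx, map_sum_two_pow_zsmul Φ hΦ]⟩, ?_⟩
  rintro ⟨z, hz⟩
  obtain ⟨c, rfl⟩ := hi a
  have hΦc : Φ (linearCombination ℤ i c) = linearCombination ℤ v (mapDomain u c) := by
    rw [linearCombination_mapDomain, ← Φ.coe_toIntLinearMap, apply_linearCombination]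
    exact congr_arg (linearCombination ℤ · c) (funext hΦ)
  have hc : mapDomain u c = binaryWord z := hv <| by rw [← hΦc, ← hz, linearCombination_binaryWord]
  have hz_mem : ∀ j, z j ∈ range u := fun j => by
    classical
    obtain ⟨x, -, hx⟩ := Finset.mem_image.mp (mapDomain_support (hc ▸ mem_support_binaryWord z j))
    exact ⟨x, hx⟩
  choose x hx using hz_mem
  obtain rfl : u ∘ x = z := funext hx
  rw [← mapDomain_binaryWord] at hc
  exact ⟨x, by rw [mapDomain_injective hu hc, linearCombination_binaryWord]⟩

end TwoPowSum

namespace IsFreeAbelianTopGroup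

variable {X A : Type*} [TopologicalSpace X] [AddCommGroup A] [TopologicalSpace A]
  [IsTopologicalAddGroup A] {i : X → A}

lemma linearCombination_surjective (hfree : IsFreeAbelianTopGroup X A i) :
    Function.Surjective (Finsupp.linearCombination ℤ i) := by
  rw [← LinearMap.range_eq_top, Finsupp.range_linearCombination, ← Submodule.toAddSubgroup_inj,
    Submodule.span_int_eq_addSubgroupClosure, hfree.generates, Submodule.top_toAddSubgroup]

lemma exists_continuous_real_extension (hfree : IsFreeAbelianTopGroup X A i) (g : C(X, ℝ)) :
    ∃ φ : A →+ ℝ, Continuous φ ∧ ∀ x, φ (i x) = g x := by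
  obtain ⟨h, hc, hh⟩ := hfree.lift (ULift ℝ) (ULift.up ∘ g) (by fun_prop)
  exact ⟨(AddEquiv.ulift : ULift ℝ ≃+ ℝ).toAddMonoidHom.comp h, continuous_uliftDown.comp hc,
    fun x => congr_arg ULift.down (hh x)⟩

lemma exists_continuous_pi_extension (hfree : IsFreeAbelianTopGroup X A i) {ι : Type*}
    (g : ι → C(X, ℝ)) : ∃ Φ : A →+ (ι → ℝ), Continuous Φ ∧ ∀ x, Φ (i x) = fun k => g k x := by
  choose φ hφc hφ using fun k => hfree.exists_continuous_real_extension (g k)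
  exact ⟨AddMonoidHom.pi φ, continuous_pi hφc, fun x => funext fun k => hφ k x⟩

end IsFreeAbelianTopGroup

/-- For a Tychonoff space `X`, the map `(x₁,…,x_n) ↦ x₁ + 2x₂ + ⋯ + 2^{n-1}x_n` is a
homeomorphism of `X^n` onto a closed subspace of `A_{2^n - 1}(X)`: it takes values in
`A_{2^n-1}(X)`, is a topological embedding, and its range is closed in `A_{2^n-1}(X)`. -/
theorem closed_copy_of_power_in_free_abelian (X : Type*) [TopologicalSpace X] [T35Space X]
    (A : Type*) [AddCommGroup A] [TopologicalSpace A] [IsTopologicalAddGroup A]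
    (i : X → A) (hfree : IsFreeAbelianTopGroup X A i) (n : ℕ)
    (f : (Fin n → X) → A)
    (hf : ∀ x : Fin n → X, f x = ∑ j : Fin n, ((2 : ℤ) ^ (j : ℕ)) • i (x j)) :
    Set.range f ⊆ wordsLe i (2 ^ n - 1) ∧
    IsEmbedding f ∧
    IsClosed {a : ↥(wordsLe i (2 ^ n - 1)) | (a : A) ∈ Set.range f} := by
  replace hf : f = fun x => ∑ j : Fin n, (2 : ℤ) ^ (j : ℕ) • i (x j) := funext hf
  let u : X → StoneCech X := stoneCechUnit
  let v : StoneCech X → C(StoneCech X, ℝ) → ℝ := fun p ψ => ψ p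
  let T : (Fin n → StoneCech X) → C(StoneCech X, ℝ) → ℝ :=
    fun z => ∑ j : Fin n, (2 : ℤ) ^ (j : ℕ) • v (z j)
  have hT : IsClosedEmbedding T := Continuous.isClosedEmbedding (by fun_prop)
    (linearIndependent_eval_continuousMap _).injective_sum_two_pow_zsmul
  obtain ⟨Φ, hΦc, hΦ⟩ := hfree.exists_continuous_pi_extension
    fun ψ : C(StoneCech X, ℝ) => ψ.comp ⟨u, continuous_stoneCechUnit⟩
  have hrange : range f = Φ ⁻¹' range T := hf ▸ range_sum_two_pow_zsmul_eq_preimage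
    hfree.linearCombination_surjective injective_stoneCechUnit_of_t35Space
    (linearIndependent_eval_continuousMap _) Φ hΦ
  refine ⟨hf ▸ fun _ ⟨x, hx⟩ => hx ▸ sum_two_pow_zsmul_mem_wordsLe x, ?_, ?_⟩
  · have hcomp : Φ ∘ f = T ∘ fun x j => u (x j) := hf ▸ funext (map_sum_two_pow_zsmul Φ hΦ)
    have hfc : Continuous f := hf ▸ by have := hfree.continuous_incl; fun_prop
    refine IsEmbedding.of_comp hfc hΦc ?_
    rw [hcomp]
    exact hT.isEmbedding.comp (IsEmbedding.piMap fun _ => isEmbedding_stoneCechUnit)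
  · rw [show {a : wordsLe i (2 ^ n - 1) | (a : A) ∈ range f} = Subtype.val ⁻¹' range f from rfl,
      hrange]
    exact (hT.isClosed_range.preimage hΦc).preimage continuous_subtype_val
end

section
/- Let X be a Tychonoff space such that every compact subset of A(X) is contained in A_n(X) for some n, and suppose each A_n(X) is a normal k-space. If A(X) is a k_R-space, then A(X) is a k-space. -/
open Set Filter Topology Cardinal

/-!
Each `A_n(X)` is closed in `A(X)` (Graev). Evaluation `x ↦ (f ↦ f x)` sends `X`, injectively
by complete regularity, into the `[0,1]`-valued characters of the monoid `C(X, [0,1])`; these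
form a compact subset of `ℝ^C(X, [0,1])`, and distinct characters are linearly independent
(Dedekind). Extending evaluation to a continuous homomorphism `H` on `A(X)` and comparing
coefficients gives `A_n(X) = H⁻¹(words of length ≤ n in the characters)`, and those words form
a compact set.

Lozano's argument then applies: let `C` have closed traces on compact sets and `a ∈ A_N(X) \ C`.
The traces of `C` on the `k`-spaces `A_n(X)` are closed, so Urysohn's lemma on `A_N(X)`, then
Tietze's theorem on `A_{n+1}(X)` applied to the closed set `A_n(X) ∪ (C ∩ A_{n+1}(X))`, build a
function that is `1` at `a`, vanishes on `C` and is continuous on every `A_n(X)`. Every compact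
set lies in some `A_n(X)`, so the function is continuous by the `k_R` property, and
`a ∉ closure C`.
-/

open Function Pointwise

section Words

variable {ι κ A G : Type*} [AddCommGroup A] [AddCommGroup G]

def wordSum (u : ι → G) (l : List (ι × Bool)) : G :=
  (l.map fun p => if p.2 then u p.1 else -u p.1).sum

lemma mem_wordsLe {u : ι → G} {n : ℕ} {a : G} :
    a ∈ wordsLe u n ↔ ∃ l : List (ι × Bool), l.length ≤ n ∧ a = wordSum u l :=
  Iff.rfl

@[simp] lemma wordSum_nil (u : ι → G) : wordSum u [] = 0 := rfl

@[simp] lemma wordSum_cons (u : ι → G) (p : ι × Bool) (l : List (ι × Bool)) :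
    wordSum u (p :: l) = (if p.2 then u p.1 else -u p.1) + wordSum u l := by
  simp [wordSum]

lemma map_wordSum (H : G →+ A) (u : ι → G) (l : List (ι × Bool)) :
    H (wordSum u l) = wordSum (H ∘ u) l := by
  induction l with
  | nil => simp
  | cons p l ih => rcases p with ⟨x, _ | _⟩ <;> simp [ih]

lemma wordSum_comp (v : κ → G) (j : ι → κ) (l : List (ι × Bool)) :
    wordSum (v ∘ j) l = wordSum v (l.map fun p => (j p.1, p.2)) := by
  induction l with
  | nil => rfl
  | cons p l ih => simp [ih]

lemma wordsLe_zero (u : ι → G) : wordsLe u 0 = {0} := by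
  refine subset_antisymm ?_ fun a ha => ⟨[], le_rfl, ha⟩
  rintro _ ⟨l, hl, rfl⟩
  rw [List.length_eq_zero_iff.1 (Nat.le_zero.1 hl)]
  rfl

lemma wordsLe_mono (u : ι → G) : Monotone (wordsLe u) := by
  rintro m n hmn a ⟨l, hl, rfl⟩
  exact ⟨l, hl.trans hmn, rfl⟩

lemma wordsLe_succ (u : ι → G) (n : ℕ) :
    wordsLe u (n + 1) = insert 0 ((range u ∪ -range u) + wordsLe u n) := by
  ext a
  simp only [mem_wordsLe]
  constructor
  · rintro ⟨_ | ⟨⟨x, b⟩, l⟩, hl, rfl⟩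
    · exact Or.inl rfl
    · refine Or.inr ⟨_, ?_, wordSum u l, ⟨l, by simpa using hl, rfl⟩,
        (wordSum_cons u _ l).symm⟩
      cases b <;> simp
  · rintro (rfl | ⟨_, (⟨x, rfl⟩ | ⟨x, hx⟩), _, ⟨l, hl, rfl⟩, rfl⟩)
    · exact ⟨[], by simp, rfl⟩
    · exact ⟨(x, true) :: l, by simpa using hl, by simp [wordSum]⟩
    · exact ⟨(x, false) :: l, by simpa using hl, by simp [wordSum, hx]⟩

lemma AddMonoidHom.mapsTo_wordsLe (H : A →+ G) {i : ι → A} {v : κ → G} {j : ι → κ}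
    (hHi : H ∘ i = v ∘ j) (n : ℕ) : MapsTo H (wordsLe i n) (wordsLe v n) := by
  intro a ha
  obtain ⟨l, hl, rfl⟩ := mem_wordsLe.1 ha
  exact mem_wordsLe.2 ⟨l.map fun p => (j p.1, p.2), by simpa using hl,
    by rw [map_wordSum, hHi, wordSum_comp]⟩

noncomputable def wordCoeffs (l : List (ι × Bool)) : ι →₀ ℤ :=
  (l.map fun p => Finsupp.single p.1 (if p.2 then 1 else -1)).sum

@[simp] lemma wordCoeffs_nil : wordCoeffs ([] : List (ι × Bool)) = 0 := rfl

@[simp] lemma wordCoeffs_cons (p : ι × Bool) (l : List (ι × Bool)) :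
    wordCoeffs (p :: l) = Finsupp.single p.1 (if p.2 then 1 else -1) + wordCoeffs l := by
  simp [wordCoeffs]

lemma linearCombination_wordCoeffs (u : ι → G) (l : List (ι × Bool)) :
    Finsupp.linearCombination ℤ u (wordCoeffs l) = wordSum u l := by
  induction l with
  | nil => simp
  | cons p l ih => rcases p with ⟨x, _ | _⟩ <;> simp [ih]

lemma linearCombination_mem_wordsLe (u : ι → G) {j : ι → κ} (hj : Injective j)
    (L : List (κ × Bool)) (c : ι →₀ ℤ) (hc : ∀ x, c x = wordCoeffs L (j x)) :
    Finsupp.linearCombination ℤ u c ∈ wordsLe u L.length := by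
  induction L generalizing c with
  | nil =>
    obtain rfl : c = 0 := Finsupp.ext fun x => by simpa using hc x
    simp [wordsLe_zero]
  | cons p L ih =>
    obtain ⟨q, b⟩ := p
    by_cases hq : q ∈ range j
    · obtain ⟨x₀, rfl⟩ := hq
      set s : ι →₀ ℤ := Finsupp.single x₀ (if b then 1 else -1)
      have hc' : ∀ x, (c - s) x = wordCoeffs L (j x) := fun x => by
        rw [Finsupp.sub_apply, hc, wordCoeffs_cons, Finsupp.add_apply,
          Finsupp.single_apply_left hj, add_sub_cancel_left]
      obtain ⟨l, hl, hsum⟩ := mem_wordsLe.1 (ih (c - s) hc')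
      refine mem_wordsLe.2 ⟨(x₀, b) :: l, by simpa using hl, ?_⟩
      rw [← sub_add_cancel c s, map_add, hsum, wordSum_cons, add_comm]
      cases b <;> simp [s]
    · refine wordsLe_mono u (Nat.le_succ _) (ih c fun x => ?_)
      have : q ≠ j x := fun h => hq ⟨x, h.symm⟩
      simp [hc, this]

theorem preimage_wordsLe_eq (H : A →+ G) {i : ι → A} {v : κ → G}
    (hv : LinearIndependent ℤ v) {j : ι → κ} (hj : Injective j) (hHi : H ∘ i = v ∘ j)
    (hcover : ∀ a, ∃ m, a ∈ wordsLe i m) (n : ℕ) : H ⁻¹' wordsLe v n = wordsLe i n := by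
  refine subset_antisymm (fun a ha => ?_) (H.mapsTo_wordsLe hHi n)
  obtain ⟨m, hm⟩ := hcover a
  obtain ⟨l, -, rfl⟩ := mem_wordsLe.1 hm
  obtain ⟨L, hL, hHL⟩ := mem_wordsLe.1 ha
  have hcoeffs : Finsupp.mapDomain j (wordCoeffs l) = wordCoeffs L := hv <| by
    rw [Finsupp.linearCombination_mapDomain, ← hHi, ← H.coe_toIntLinearMap,
      ← Finsupp.apply_linearCombination, linearCombination_wordCoeffs,
      linearCombination_wordCoeffs, H.coe_toIntLinearMap, hHL]
  rw [← linearCombination_wordCoeffs]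
  exact wordsLe_mono i hL <| linearCombination_mem_wordsLe i hj L _ fun x => by
    rw [← hcoeffs, Finsupp.mapDomain_apply hj]

lemma isCompact_wordsLe [TopologicalSpace G] [IsTopologicalAddGroup G] {u : ι → G}
    (hu : IsCompact (range u)) (n : ℕ) : IsCompact (wordsLe u n) := by
  induction n with
  | zero => simp [wordsLe_zero]
  | succ n ih => rw [wordsLe_succ]; exact ((hu.union hu.neg).add ih).insert 0

end Words

section Characters

def unitCharacters (M : Type*) [Monoid M] : Set (M → ℝ) :=
  range (fun φ : M →* ℝ => ⇑φ) ∩ univ.pi fun _ => Icc 0 1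

variable (M : Type*) [Monoid M]

lemma isCompact_unitCharacters : IsCompact (unitCharacters M) :=
  (isCompact_univ_pi fun _ => isCompact_Icc).inter_left (MonoidHom.isClosed_range_coe M ℝ)

lemma linearIndependent_unitCharacters :
    LinearIndependent ℤ (Subtype.val : unitCharacters M → M → ℝ) :=
  ((linearIndepOn_id_range_iff DFunLike.coe_injective).2 (linearIndependent_monoidHom M ℝ)
    |>.mono inter_subset_left).restrict_scalars' ℤ

end Characters

open unitInterval

section Evaluation

variable (X : Type*) [TopologicalSpace X]

def evalUnitInterval (x : X) : C(X, I) → ℝ := fun f => f x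

lemma evalUnitInterval_mem_unitCharacters (x : X) :
    evalUnitInterval X x ∈ unitCharacters C(X, I) :=
  ⟨⟨⟨⟨evalUnitInterval X x, rfl⟩, fun _ _ => rfl⟩, rfl⟩, fun f _ => (f x).2⟩

lemma injective_evalUnitInterval [CompletelyRegularSpace X] [T1Space X] :
    Injective (evalUnitInterval X) := by
  intro x y hxy
  by_contra hne
  obtain ⟨f, hf, hfx, hfy⟩ :=
    CompletelyRegularSpace.completely_regular x {y} isClosed_singleton hne
  have := congrFun hxy ⟨f, hf⟩
  simp [evalUnitInterval, hfx, hfy rfl] at this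

end Evaluation

section FreeGroup

variable {X A : Type*} [TopologicalSpace X] [AddCommGroup A] [TopologicalSpace A]
  [IsTopologicalAddGroup A] {i : X → A}

lemma IsFreeAbelianTopGroup.exists_lift_pi (hfree : IsFreeAbelianTopGroup X A i) {ι : Type*}
    (f : ι → X → ℝ) (hf : ∀ k, Continuous (f k)) :
    ∃ H : A →+ (ι → ℝ), Continuous H ∧ ∀ x, H (i x) = fun k => f k x := by
  choose h hcont hh using fun k =>
    hfree.lift (ULift ℝ) (fun x => ULift.up (f k x)) (continuous_uliftUp.comp (hf k))
  refine ⟨AddMonoidHom.pi fun k =>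
      (AddEquiv.ulift : ULift ℝ ≃+ ℝ).toAddMonoidHom.comp (h k),
    continuous_pi fun k => continuous_uliftDown.comp (hcont k), fun x => ?_⟩
  ext k
  exact congrArg ULift.down (hh k x)

theorem IsFreeAbelianTopGroup.isClosed_wordsLe [CompletelyRegularSpace X] [T1Space X]
    (hfree : IsFreeAbelianTopGroup X A i) (hcover : ∀ a, ∃ m, a ∈ wordsLe i m) (n : ℕ) :
    IsClosed (wordsLe i n) := by
  obtain ⟨H, hHc, hH⟩ := hfree.exists_lift_pi (fun (f : C(X, I)) x => (f x : ℝ))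
    fun f => continuous_subtype_val.comp f.continuous
  have hHi : H ∘ i = Subtype.val ∘ fun x => ⟨_, evalUnitInterval_mem_unitCharacters X x⟩ :=
    funext hH
  rw [← preimage_wordsLe_eq H (linearIndependent_unitCharacters _)
    (fun x y hxy => injective_evalUnitInterval X (congrArg Subtype.val hxy)) hHi hcover]
  refine (isCompact_wordsLe ?_ n).isClosed.preimage hHc
  simpa using isCompact_unitCharacters C(X, I)

end FreeGroup

lemma exists_eqOn_of_eqOn_succ {A β : Type*} {W : ℕ → Set A}
    (hmono : Monotone W) (hcover : ∀ a, ∃ n, a ∈ W n)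
    (f : ℕ → A → β) (hf : ∀ n, EqOn (f (n + 1)) (f n) (W n)) :
    ∃ F : A → β, ∀ n, EqOn F (f n) (W n) := by
  classical
  have hagree : ∀ m n, m ≤ n → EqOn (f n) (f m) (W m) := fun m n hmn => by
    induction n, hmn using Nat.le_induction with
    | base => exact eqOn_refl _ _
    | succ n hmn ih => exact fun a ha => (hf n (hmono hmn ha)).trans (ih ha)
  refine ⟨fun a => f (Nat.find (hcover a)) a, fun n a ha => ?_⟩
  exact (hagree _ n (Nat.find_min' _ ha) (Nat.find_spec (hcover a))).symm

section KSpace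

variable {A : Type*} [TopologicalSpace A] {W : ℕ → Set A}

lemma exists_mem_of_forall_isCompact_subset (hcomp : ∀ K, IsCompact K → ∃ n, K ⊆ W n)
    (a : A) : ∃ n, a ∈ W n :=
  (hcomp {a} isCompact_singleton).imp fun _ => singleton_subset_iff.1

lemma IsKSpace.isClosed_preimage_val {T : Set A} (hT : IsKSpace T) {C : Set A}
    (hC : ∀ K : Set A, IsCompact K → IsClosed (Subtype.val ⁻¹' C : Set K)) :
    IsClosed (Subtype.val ⁻¹' C : Set T) := by
  refine hT _ fun K hK => ?_
  let toImage : K → Subtype.val '' K := fun y => ⟨y.1.1, y.1, y.2, rfl⟩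
  exact (hC _ (hK.image continuous_subtype_val)).preimage (f := toImage) (by fun_prop)

lemma ContinuousMap.exists_continuousOn_eq {T : Set A} (g : C(T, ℝ)) :
    ∃ f : A → ℝ, ContinuousOn f T ∧ ∀ y : T, f y = g y := by
  classical
  refine ⟨fun a => if h : a ∈ T then g ⟨a, h⟩ else 0, ?_, fun y => dif_pos y.2⟩
  rw [continuousOn_iff_continuous_domRestrict]
  convert g.continuous using 1
  exact funext fun y => dif_pos y.2

lemma exists_continuousOn_one_zero {T C : Set A} [NormalSpace T] [T1Space T]
    (hC : IsClosed (Subtype.val ⁻¹' C : Set T)) {a : A} (haT : a ∈ T) (haC : a ∉ C) :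
    ∃ f : A → ℝ, ContinuousOn f T ∧ f a = 1 ∧ EqOn f 0 (T ∩ C) := by
  obtain ⟨u, hu0, hu1, -⟩ := exists_continuous_zero_one_of_isClosed hC isClosed_singleton
    (disjoint_singleton_right.2 (show (⟨a, haT⟩ : T) ∉ _ from haC))
  obtain ⟨f, hf, hfu⟩ := u.exists_continuousOn_eq
  exact ⟨f, hf, (hfu ⟨a, haT⟩).trans (hu1 rfl),
    fun b hb => (hfu ⟨b, hb.1⟩).trans (hu0 hb.2)⟩

lemma exists_extension_vanishing {S T C : Set A} [NormalSpace T] (hST : S ⊆ T)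
    (hS : IsClosed (Subtype.val ⁻¹' S : Set T)) (hC : IsClosed (Subtype.val ⁻¹' C : Set T))
    {f : A → ℝ} (hf : ContinuousOn f S) (hfC : EqOn f 0 (S ∩ C)) :
    ∃ g : A → ℝ, ContinuousOn g T ∧ EqOn g f S ∧ EqOn g 0 (T ∩ C) := by
  set f' : T → ℝ := fun y => S.indicator f y
  have hf'0 : ∀ y : T, (y : A) ∈ C → f' y = 0 := fun y hy =>
    indicator_apply_eq_zero.2 fun hyS => hfC ⟨hyS, hy⟩
  have hf'S : ContinuousOn f' (Subtype.val ⁻¹' S) :=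
    (hf.comp continuous_subtype_val.continuousOn (mapsTo_preimage _ _)).congr
      fun y (hy : (y : A) ∈ S) => indicator_of_mem hy f
  have hf'C : ContinuousOn f' (Subtype.val ⁻¹' C) := continuousOn_const.congr hf'0
  obtain ⟨G, hG⟩ := ContinuousMap.exists_restrict_eq (hS.union hC)
    ⟨_, continuousOn_iff_continuous_domRestrict.1 (hf'S.union_of_isClosed hf'C hS hC)⟩
  have hGf' : ∀ y ∈ Subtype.val ⁻¹' (S ∪ C), G y = f' y := fun y hy =>
    DFunLike.congr_fun hG ⟨y, hy⟩
  obtain ⟨g, hg, hgG⟩ := G.exists_continuousOn_eq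
  refine ⟨g, hg, fun b hb => ?_, fun b hb => ?_⟩
  · rw [hgG ⟨b, hST hb⟩, hGf' _ (Or.inl hb)]
    exact indicator_of_mem hb f
  · rw [hgG ⟨b, hb.1⟩, hGf' _ (Or.inr hb.2)]
    exact hf'0 ⟨b, hb.1⟩ hb.2

lemma exists_continuousOn_vanishing_of_monotone (hmono : Monotone W)
    (hclosed : ∀ n, IsClosed (W n)) (hnormal : ∀ n, NormalSpace (W n))
    (hcover : ∀ a, ∃ n, a ∈ W n) {C : Set A}
    (hC : ∀ n, IsClosed (Subtype.val ⁻¹' C : Set (W n)))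
    {f : A → ℝ} (hf : ContinuousOn f (W 0)) (hfC : EqOn f 0 (W 0 ∩ C)) :
    ∃ F : A → ℝ, (∀ n, ContinuousOn F (W n)) ∧ EqOn F f (W 0) ∧ EqOn F 0 C := by
  have step : ∀ n (g : A → ℝ), ContinuousOn g (W n) ∧ EqOn g 0 (W n ∩ C) →
      ∃ g' : A → ℝ, (ContinuousOn g' (W (n + 1)) ∧ EqOn g' 0 (W (n + 1) ∩ C)) ∧
        EqOn g' g (W n) := fun n g hg => by
    have := hnormal (n + 1)
    obtain ⟨g', hg', hg'g, hg'C⟩ := exists_extension_vanishing (hmono n.le_succ)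
      ((hclosed n).preimage continuous_subtype_val) (hC (n + 1)) hg.1 hg.2
    exact ⟨g', ⟨hg', hg'C⟩, hg'g⟩
  choose! next hnext using step
  let seq : ℕ → A → ℝ := fun n => Nat.rec f next n
  have hseq : ∀ n, ContinuousOn (seq n) (W n) ∧ EqOn (seq n) 0 (W n ∩ C) := fun n => by
    induction n with
    | zero => exact ⟨hf, hfC⟩
    | succ n ih => exact (hnext n (seq n) ih).1
  obtain ⟨F, hF⟩ := exists_eqOn_of_eqOn_succ hmono hcover seq
    fun n => (hnext n (seq n) (hseq n)).2
  refine ⟨F, fun n => (hseq n).1.congr (hF n), hF 0, fun a ha => ?_⟩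
  obtain ⟨n, han⟩ := hcover a
  exact (hF n han).trans ((hseq n).2 ⟨han, ha⟩)

theorem IsKRSpace.isKSpace_of_monotone [T1Space A] (hkR : IsKRSpace A) (hmono : Monotone W)
    (hclosed : ∀ n, IsClosed (W n)) (hcomp : ∀ K, IsCompact K → ∃ n, K ⊆ W n)
    (hnormal : ∀ n, NormalSpace (W n)) (hk : ∀ n, IsKSpace (W n)) : IsKSpace A := by
  intro C hC
  have hcover := exists_mem_of_forall_isCompact_subset hcomp
  have hCW : ∀ n, IsClosed (Subtype.val ⁻¹' C : Set (W n)) := fun n =>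
    (hk n).isClosed_preimage_val hC
  refine isClosed_of_closure_subset fun a ha => by_contra fun haC => ?_
  obtain ⟨N, haN⟩ := hcover a
  have := hnormal N
  obtain ⟨f, hf, hfa, hfC⟩ := exists_continuousOn_one_zero (hCW N) haN haC
  obtain ⟨F, hFcont, hFf, hFC⟩ := exists_continuousOn_vanishing_of_monotone
    (W := fun n => W (N + n)) (fun m n hmn => hmono (by omega)) (fun n => hclosed _)
    (fun n => hnormal _) (fun b => (hcover b).imp fun n hn => hmono (by omega) hn)
    (fun n => hCW _) hf hfC
  have hF : Continuous F := hkR F fun K hK => by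
    obtain ⟨n, hKn⟩ := hcomp K hK
    exact (hFcont n).mono (hKn.trans (hmono (by omega)))
  have hFa : F a = 0 :=
    closure_minimal hFC (isClosed_singleton.preimage hF) ha
  rw [hFf haN, hfa] at hFa
  exact one_ne_zero hFa

end KSpace

/-- If every compact subset of `A(X)` lies in some `A_n(X)`, each `A_n(X)` is a normal
`k`-space, and `A(X)` is a `k_R`-space, then `A(X)` is a `k`-space. -/
theorem free_abelian_kR_implies_k (X : Type*) [TopologicalSpace X] [T35Space X]
    (A : Type*) [AddCommGroup A] [TopologicalSpace A] [IsTopologicalAddGroup A]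
    (i : X → A) (hfree : IsFreeAbelianTopGroup X A i)
    (hcomp : ∀ K : Set A, IsCompact K → ∃ n : ℕ, K ⊆ wordsLe i n)
    (hnormal : ∀ n : ℕ, NormalSpace ↥(wordsLe i n))
    (hk : ∀ n : ℕ, IsKSpace ↥(wordsLe i n))
    (hkR : IsKRSpace A) :
    IsKSpace A := by
  have hcover := exists_mem_of_forall_isCompact_subset hcomp
  have hclosed := hfree.isClosed_wordsLe hcover
  have : T1Space A := IsTopologicalAddGroup.t1Space A (wordsLe_zero i ▸ hclosed 0)
  exact hkR.isKSpace_of_monotone (wordsLe_mono i) hclosed hcomp hnormal hk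
end
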